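/- Let $X$ be a separable Banach space, $p \in [1,\infty)$, and $f(\mu) := g(\mu(\psi_1),\dots,\mu(\psi_n))$ a cylindrical function on $\mathscr{P}_p$, where $g \in C_b^1(\mathbb{R}^n)$ and each $\psi_i \in \mathscr{F}C_b^1(X)$ is a bounded $C^1$ cylindrical function on $X$ with bounded continuous Fréchet derivative $\nabla\psi_i : X \to X^*$. Then $f$ is intrinsically differentiable on $\mathscr{P}_p$ with intrinsic derivative $Df(\mu)(x) = \sum_{i=1}^n (\partial_i g)(\mu(\psi_1),\dots,\mu(\psi_n)) \, \nabla\psi_i(x)$, i.e., for every $\phi \in L^p(X \to X, \mu)$, $\lim_{\varepsilon\to 0}\varepsilon^{-1}\big(f(\mu\circ(\mathrm{id}+\varepsilon\phi)^{-1}) - f(\mu)\big) = \int_X \langle Df(\mu)(x), \phi(x)\rangle \, d\mu(x)$. -/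

import Mathlib

open MeasureTheory Filter

/-! Pushing `μ` forward along `x ↦ x + ε • φ x` turns `f` into `ε ↦ g (∫ ψᵢ (x + ε • φ x) dμ)ᵢ`.
Each `ψᵢ = Gᵢ ∘ Lᵢ` factors through a continuous linear map `Lᵢ : X → ℝ^{mᵢ}`, so every inner
integral can be differentiated under the integral sign in finite dimension, with domination
`C ‖Lᵢ‖ ‖φ‖`; this is integrable because `p ≥ 1` and `μ` is finite. The chain rule for `g`
then gives the derivative at `ε = 0`. -/

theorem ContinuousLinearMap.apply_eq_sum_mul_apply_single {ι : Type*} [Fintype ι] [DecidableEq ι]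
    (L : (ι → ℝ) →L[ℝ] ℝ) (v : ι → ℝ) : L v = ∑ i, v i * L (Pi.single i 1) := by
  conv_lhs => rw [← Finset.univ_sum_single v, map_sum]
  refine Finset.sum_congr rfl fun i _ => ?_
  rw [← smul_eq_mul, ← map_smul, ← Pi.single_smul', smul_eq_mul, mul_one]

section DerivIntegral

variable {α E : Type*} [MeasurableSpace α] {μ : Measure α}
  [NormedAddCommGroup E] [NormedSpace ℝ E] [MeasurableSpace E] [BorelSpace E]
  [SecondCountableTopology E] {G : E → ℝ} {C : ℝ} {u v : α → E}

theorem integrable_fderiv_apply (hG : ContDiff ℝ 1 G) (hGC : ∀ y, ‖fderiv ℝ G y‖ ≤ C)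
    (hu : Measurable u) (hv : Measurable v) (hvi : Integrable (‖v ·‖) μ) :
    Integrable (fun a => fderiv ℝ G (u a) (v a)) μ := by
  have hmeas : Measurable fun p : E × E => fderiv ℝ G p.1 p.2 :=
    ((hG.continuous_fderiv one_ne_zero).comp continuous_fst).clm_apply continuous_snd
      |>.measurable
  refine (hvi.const_mul C).mono' (hmeas.comp (hu.prodMk hv)).aestronglyMeasurable ?_
  filter_upwards with a
  exact ((fderiv ℝ G (u a)).le_opNorm _).trans (by gcongr; exact hGC _)

theorem hasDerivAt_integral_comp_add_smul (hG : ContDiff ℝ 1 G) (hGC : ∀ y, ‖fderiv ℝ G y‖ ≤ C)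
    (hu : Measurable u) (hv : Measurable v) (hGu : Integrable (fun a => G (u a)) μ)
    (hvi : Integrable (‖v ·‖) μ) :
    HasDerivAt (fun ε : ℝ => ∫ a, G (u a + ε • v a) ∂μ) (∫ a, fderiv ℝ G (u a) (v a) ∂μ) 0 := by
  have hline : ∀ ε : ℝ, Measurable fun a => u a + ε • v a := fun ε => hu.add (hv.const_smul ε)
  refine (hasDerivAt_integral_of_dominated_loc_of_deriv_le (F' := fun ε a =>
      fderiv ℝ G (u a + ε • v a) (v a)) (bound := fun a => C * ‖v a‖) univ_mem
    (Eventually.of_forall fun ε => (hG.continuous.measurable.comp (hline ε)).aestronglyMeasurable)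
    (by simp only [zero_smul, add_zero]; exact hGu) ?_ ?_ (hvi.const_mul C) ?_).2.congr_deriv
    (by simp)
  · simpa using (integrable_fderiv_apply hG hGC hu hv hvi).aestronglyMeasurable
  · filter_upwards with a ε _
    exact ((fderiv ℝ G _).le_opNorm _).trans (by gcongr; exact hGC _)
  · filter_upwards with a ε _
    have hlineDeriv : HasDerivAt (fun ε : ℝ => u a + ε • v a) (v a) ε := by
      simpa using ((hasDerivAt_id ε).smul_const (v a)).const_add (u a)
    exact ((hG.differentiable one_ne_zero _).hasFDerivAt.comp_hasDerivAt ε hlineDeriv)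

end DerivIntegral

section Cylindrical

variable {X E : Type*} [NormedAddCommGroup X] [NormedSpace ℝ X] [MeasurableSpace X]
  [OpensMeasurableSpace X] {μ : Measure X} [IsFiniteMeasure μ]
  [NormedAddCommGroup E] [NormedSpace ℝ E] [MeasurableSpace E] [BorelSpace E]
  [SecondCountableTopology E] {G : E → ℝ} {C : ℝ} {φ : X → X}

theorem hasDerivAt_integral_comp_clm_add_smul (L : X →L[ℝ] E) (hG : ContDiff ℝ 1 G)
    (hGC : ∀ y, |G y| ≤ C ∧ ‖fderiv ℝ G y‖ ≤ C) (hφm : Measurable φ)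
    (hφ : Integrable (‖φ ·‖) μ) :
    Integrable (fun x => fderiv ℝ G (L x) (L (φ x))) μ ∧
      HasDerivAt (fun ε : ℝ => ∫ x, G (L (x + ε • φ x)) ∂μ)
        (∫ x, fderiv ℝ G (L x) (L (φ x)) ∂μ) 0 := by
  have hLφ : Integrable (fun x => ‖L (φ x)‖) μ :=
    (hφ.const_mul ‖L‖).mono' (L.continuous.measurable.comp hφm).norm.aestronglyMeasurable
      (Eventually.of_forall fun x => by simpa using L.le_opNorm (φ x))
  have hGL : Integrable (fun x => G (L x)) μ :=
    (integrable_const C).mono' (hG.continuous.comp L.continuous).aestronglyMeasurable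
      (Eventually.of_forall fun x => (hGC _).1)
  have hLm := L.continuous.measurable
  refine ⟨integrable_fderiv_apply hG (fun y => (hGC y).2) hLm (hLm.comp hφm) hLφ, ?_⟩
  simpa using hasDerivAt_integral_comp_add_smul hG (fun y => (hGC y).2) hLm (hLm.comp hφm) hGL hLφ

end Cylindrical

theorem stmt13_general {X : Type*} [NormedAddCommGroup X] [NormedSpace ℝ X]
    [MeasurableSpace X] [BorelSpace X] [SecondCountableTopology X]
    (p : ℝ) (hp : 1 ≤ p)
    -- the outer function g ∈ C_b^1(ℝⁿ)
    (n : ℕ) (g : (Fin n → ℝ) → ℝ) (hg : ContDiff ℝ 1 g)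
    -- data for the cylindrical functions ψᵢ ∈ 𝓕C_b^1(X)
    (m : Fin n → ℕ) (x' : (i : Fin n) → Fin (m i) → (X →L[ℝ] ℝ))
    (G : (i : Fin n) → (Fin (m i) → ℝ) → ℝ) (hG : ∀ i, ContDiff ℝ 1 (G i))
    (hGb : ∀ i, ∃ C : ℝ, ∀ y, |G i y| ≤ C ∧ ‖fderiv ℝ (G i) y‖ ≤ C)
    (ψ : Fin n → X → ℝ) (hψ : ∀ i x, ψ i x = G i (fun j => x' i j x))
    -- the Fréchet derivatives ∇ψᵢ : X → X*
    (Dψ : Fin n → X → (X →L[ℝ] ℝ))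
    (hDψ : ∀ i x, Dψ i x =
      ∑ j, (fderiv ℝ (G i) (fun j => x' i j x) (Pi.single j 1)) • x' i j)
    -- the cylindrical function f on measures and its intrinsic derivative Df
    (f : Measure X → ℝ) (hf : ∀ μ : Measure X, f μ = g (fun i => ∫ x, ψ i x ∂μ))
    (Df : Measure X → X → (X →L[ℝ] ℝ))
    (hDf : ∀ (μ : Measure X) (x : X), Df μ x =
      ∑ i, (fderiv ℝ g (fun i => ∫ y, ψ i y ∂μ) (Pi.single i 1)) • Dψ i x)
    -- a point μ ∈ 𝒫_p and a tangent vector φ ∈ L^p(X → X, μ)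
    (μ : Measure X) (hμ : IsProbabilityMeasure μ)
    (φ : X → X) (hφm : Measurable φ) (hφp : Integrable (fun x => ‖φ x‖ ^ p) μ) :
    Tendsto (fun ε : ℝ => ε⁻¹ * (f (μ.map (fun x => x + ε • φ x)) - f μ))
      (nhdsWithin 0 {0}ᶜ) (nhds (∫ x, Df μ x (φ x) ∂μ)) := by
  set L : (i : Fin n) → X →L[ℝ] (Fin (m i) → ℝ) := fun i => ContinuousLinearMap.pi (x' i)
  have hψL : ∀ i x, ψ i x = G i (L i x) := hψ
  have hDψL : ∀ i x v, Dψ i x v = fderiv ℝ (G i) (L i x) (L i v) := by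
    intro i x v
    rw [hDψ, ContinuousLinearMap.apply_eq_sum_mul_apply_single _ (L i v)]
    simp [L, mul_comm]
  have hφ : Integrable (‖φ ·‖) μ := by
    simpa using integrable_norm_rpow_of_le hφm.aestronglyMeasurable zero_le_one
      (zero_le_one.trans hp) hp hφp
  have hψc : ∀ i, Continuous (ψ i) := fun i =>
    (continuous_congr (hψL i)).2 ((hG i).continuous.comp (L i).continuous)
  have hψφ : ∀ i, Integrable (fun x => Dψ i x (φ x)) μ ∧
      HasDerivAt (fun ε : ℝ => ∫ x, ψ i (x + ε • φ x) ∂μ) (∫ x, Dψ i x (φ x) ∂μ) 0 := by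
    simp only [hψL, hDψL]
    exact fun i => hasDerivAt_integral_comp_clm_add_smul (L i) (hG i) (hGb i).choose_spec hφm hφ
  have hmap : ∀ ε : ℝ, f (μ.map fun x => x + ε • φ x) = g fun i => ∫ x, ψ i (x + ε • φ x) ∂μ := by
    intro ε
    rw [hf]
    congr with i
    exact integral_map (measurable_id.add (hφm.const_smul ε)).aemeasurable
      (hψc i).aestronglyMeasurable
  have hderiv := (hg.differentiable one_ne_zero _).hasFDerivAt.comp_hasDerivAt 0
    (hasDerivAt_pi.2 fun i => (hψφ i).2)
  have hval : ∫ x, Df μ x (φ x) ∂μ =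
      fderiv ℝ g (fun i => ∫ y, ψ i y ∂μ) (fun i => ∫ x, Dψ i x (φ x) ∂μ) := by
    simp only [hDf, sum_apply, FunLike.coe_smul, Pi.smul_apply, smul_eq_mul]
    rw [integral_finsetSum _ fun i _ => (hψφ i).1.const_mul _,
      ContinuousLinearMap.apply_eq_sum_mul_apply_single (fderiv ℝ g _)]
    exact Finset.sum_congr rfl fun i _ => by rw [integral_const_mul, mul_comm]
  rw [hasDerivAt_iff_tendsto_slope_zero] at hderiv
  simpa [hmap, hf, hval] using hderiv

/-- Cylindrical functions `f(μ) = g(μ(ψ₁),…,μ(ψₙ))` on the `p`-Wasserstein space are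
intrinsically differentiable, with intrinsic derivative
`Df(μ)(x) = ∑ᵢ ∂ᵢg(μ(ψ₁),…,μ(ψₙ)) ∇ψᵢ(x)`. -/
theorem stmt13 {X : Type*} [NormedAddCommGroup X] [NormedSpace ℝ X]
    [MeasurableSpace X] [BorelSpace X] [SecondCountableTopology X] [CompleteSpace X]
    (p : ℝ) (hp : 1 ≤ p)
    -- the outer function g ∈ C_b^1(ℝⁿ)
    (n : ℕ) (g : (Fin n → ℝ) → ℝ) (hg : ContDiff ℝ 1 g)
    (hgb : ∃ C : ℝ, ∀ y, |g y| ≤ C ∧ ‖fderiv ℝ g y‖ ≤ C)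
    -- data for the cylindrical functions ψᵢ ∈ 𝓕C_b^1(X)
    (m : Fin n → ℕ) (x' : (i : Fin n) → Fin (m i) → (X →L[ℝ] ℝ))
    (G : (i : Fin n) → (Fin (m i) → ℝ) → ℝ) (hG : ∀ i, ContDiff ℝ 1 (G i))
    (hGb : ∀ i, ∃ C : ℝ, ∀ y, |G i y| ≤ C ∧ ‖fderiv ℝ (G i) y‖ ≤ C)
    (ψ : Fin n → X → ℝ) (hψ : ∀ i x, ψ i x = G i (fun j => x' i j x))
    -- the Fréchet derivatives ∇ψᵢ : X → X*
    (Dψ : Fin n → X → (X →L[ℝ] ℝ))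
    (hDψ : ∀ i x, Dψ i x =
      ∑ j, (fderiv ℝ (G i) (fun j => x' i j x) (Pi.single j 1)) • x' i j)
    -- the cylindrical function f on measures and its intrinsic derivative Df
    (f : Measure X → ℝ) (hf : ∀ μ : Measure X, f μ = g (fun i => ∫ x, ψ i x ∂μ))
    (Df : Measure X → X → (X →L[ℝ] ℝ))
    (hDf : ∀ (μ : Measure X) (x : X), Df μ x =
      ∑ i, (fderiv ℝ g (fun i => ∫ y, ψ i y ∂μ) (Pi.single i 1)) • Dψ i x)
    -- a point μ ∈ 𝒫_p and a tangent vector φ ∈ L^p(X → X, μ)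
    (μ : Measure X) (hμ : IsProbabilityMeasure μ)
    (hμp : Integrable (fun x => ‖x‖ ^ p) μ)
    (φ : X → X) (hφm : Measurable φ) (hφp : Integrable (fun x => ‖φ x‖ ^ p) μ) :
    Tendsto (fun ε : ℝ => ε⁻¹ * (f (μ.map (fun x => x + ε • φ x)) - f μ))
      (nhdsWithin 0 {0}ᶜ) (nhds (∫ x, Df μ x (φ x) ∂μ)) :=
  stmt13_general p hp n g hg m x' G hG hGb ψ hψ Dψ hDψ f hf Df hDf μ hμ φ hφm hφp
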